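/- arXiv:2406.20013 — 3 statements merged into one kernel-verified Lean document; each statement's English description precedes it below -/
import Mathlib

section
/- Let V ⊆ ℚⁿ be a ℚ-linear subspace of dimension d. Inside the d-th exterior power ⋀^d ℚⁿ, the intersection of the subspace ⋀^d V (the span of v₁ ∧ ⋯ ∧ v_d with all v_i ∈ V) with the lattice ⋀^d ℤⁿ (the ℤ-span of wedge products of elements of ℤⁿ) equals det(V ∩ ℤⁿ), i.e., the ℤ-submodule generated by the wedge products of d elements of V ∩ ℤⁿ. -/
/-!
Let `L = V ∩ ℤⁿ`. Since `ℤⁿ / L` is torsion-free, a Smith normal form basis `c` of `ℤⁿ` adapted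
to `L` has a subfamily `ℓ = (c (f i))ᵢ` spanning `V`; it has `d` members. Then `⋀^d V` is the line
`ℚ ∙ ℓ₁ ∧ ⋯ ∧ ℓ_d`, and the minor in the `c`-coordinates indexed by `f` is a linear form on
`⋀^d ℚⁿ` taking integral values on `⋀^d ℤⁿ` and the value `1` on `ℓ₁ ∧ ⋯ ∧ ℓ_d`. So every
element of `⋀^d V ∩ ⋀^d ℤⁿ` is an integral multiple of `ℓ₁ ∧ ⋯ ∧ ℓ_d`, which lies in `det L`.
-/

noncomputable def stdLattice (n : ℕ) : Submodule ℤ (Fin n → ℚ) :=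
  Submodule.span ℤ (Set.range fun i : Fin n => (Pi.single i (1 : ℚ) : Fin n → ℚ))

open Module Submodule ExteriorAlgebra

namespace AlternatingMap

variable {R M N ι : Type*} [CommRing R] [AddCommGroup M] [Module R M] [AddCommGroup N]
  [Module R N] [Fintype ι] [DecidableEq ι]

theorem map_comp_mem_span_singleton (g : M [⋀^ι]→ₗ[R] N) (v : ι → M) (r : ι → ι) :
    g (v ∘ r) ∈ R ∙ g v := by
  by_cases hr : Function.Injective r
  · rw [show v ∘ r = v ∘ Equiv.ofBijective r (Finite.injective_iff_bijective.mp hr) from rfl,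
      map_perm, Units.smul_def]
    exact zsmul_mem (mem_span_singleton_self _) _
  · rw [g.map_eq_zero_of_not_injective _ fun h => hr h.of_comp]
    exact zero_mem _

theorem map_mem_span_singleton_of_mem_span (g : M [⋀^ι]→ₗ[R] N) {u v : ι → M}
    (hu : ∀ i, u i ∈ span R (Set.range v)) : g u ∈ R ∙ g v := by
  choose c hc using fun i => mem_span_range_iff_exists_fun R |>.mp (hu i)
  obtain rfl : u = fun i => ∑ j, c i j • v j := funext fun i => (hc i).symm
  rw [← coe_multilinearMap, MultilinearMap.map_sum]
  refine sum_mem fun r _ => ?_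
  simpa only [coe_multilinearMap, map_smul_univ, Function.comp_def] using
    smul_mem _ (∏ i, c i (r i)) (g.map_comp_mem_span_singleton v r)

end AlternatingMap

namespace ExteriorAlgebra

variable (R : Type*) {M : Type*} [CommRing R] [AddCommGroup M] [Module R M]

def wedgeProducts (d : ℕ) (S : Set M) : Set (ExteriorAlgebra R M) :=
  {w | ∃ v : Fin d → M, (∀ i, v i ∈ S) ∧ w = ιMulti R d v}

theorem span_wedgeProducts_span_le {d : ℕ} (ℓ : Fin d → M) :
    span R (wedgeProducts R d (span R (Set.range ℓ) : Set M)) ≤ R ∙ ιMulti R d ℓ :=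
  span_le.mpr fun _ ⟨_, hv, hw⟩ => hw ▸ (ιMulti R d).map_mem_span_singleton_of_mem_span hv

end ExteriorAlgebra

theorem Module.Basis.extendOfIsLattice_repr_apply {R K V κ : Type*} [CommRing R] [Field K]
    [Algebra R K] [IsFractionRing R K] [AddCommGroup V] [Module K V] [Module R V]
    [IsScalarTower R K V] {M : Submodule R V} [M.IsLattice K] (b : Basis κ R M) (x : M) (i : κ) :
    (b.extendOfIsLattice K).repr x i = algebraMap R K (b.repr x i) := by
  let lhs : M →ₗ[R] K := ((b.extendOfIsLattice K).coord i).restrictScalars R ∘ₗ M.subtype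
  let rhs : M →ₗ[R] K := Algebra.linearMap R K ∘ₗ b.coord i
  have : lhs = rhs := b.ext fun j => by
    simp only [lhs, rhs, LinearMap.comp_apply, LinearMap.restrictScalars_apply, subtype_apply,
      ← b.extendOfIsLattice_apply K j, Basis.coord_apply, Basis.repr_self, Algebra.linearMap_apply]
    by_cases hji : j = i <;> simp [hji]
  exact LinearMap.congr_fun this x

variable {E : Type*} [AddCommGroup E] [Module ℚ E]

namespace Submodule.IsLattice

theorem exists_int_smul_mem (Λ : Submodule ℤ E) [Λ.IsLattice ℚ] (x : E) :
    ∃ c : ℤ, c ≠ 0 ∧ c • x ∈ Λ := by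
  let bΛ := Free.chooseBasis ℤ Λ
  let bE := bΛ.extendOfIsLattice ℚ
  obtain ⟨c, hc⟩ :=
    IsLocalization.exist_integer_multiples (nonZeroDivisors ℤ) Finset.univ (bE.repr x)
  refine ⟨c, nonZeroDivisors.coe_ne_zero c, ?_⟩
  rw [← bE.sum_repr x, Finset.smul_sum]
  refine sum_mem fun i _ => ?_
  obtain ⟨z, hz⟩ := hc i (Finset.mem_univ i)
  rw [← smul_assoc, ← hz, bΛ.extendOfIsLattice_apply ℚ, algebraMap_int_eq, eq_intCast,
    Int.cast_smul_eq_zsmul]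
  exact zsmul_mem (bΛ i).2 z

theorem exists_basis_subfamily_span_eq (Λ : Submodule ℤ E) [Λ.IsLattice ℚ] (V : Submodule ℚ E) :
    ∃ (b : Basis (Free.ChooseBasisIndex ℤ Λ) ℤ Λ) (m : ℕ)
      (f : Fin m ↪ Free.ChooseBasisIndex ℤ Λ), span ℚ (Set.range fun i => (b (f i) : E)) = V := by
  obtain ⟨m, bM, bN, f, a, snf⟩ :=
    Submodule.smithNormalForm (Free.chooseBasis ℤ Λ) ((V.restrictScalars ℤ).comap Λ.subtype)
  refine ⟨bM, m, f, le_antisymm (span_le.mpr ?_) fun v hv => ?_⟩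
  · rintro _ ⟨i, rfl⟩
    have ha : a i ≠ 0 := fun h => bN.ne_zero i (by ext; simp [snf, h])
    have hbN : ((bN i : Λ) : E) ∈ V := (bN i).2
    rwa [snf i, coe_smul, ← Int.cast_smul_eq_zsmul ℚ, V.smul_mem_iff (Int.cast_ne_zero.mpr ha)]
      at hbN
  · obtain ⟨c, hc, hcvΛ⟩ := exists_int_smul_mem Λ v
    let y : (V.restrictScalars ℤ).comap Λ.subtype :=
      ⟨⟨c • v, hcvΛ⟩, (V.restrictScalars ℤ).smul_mem c hv⟩
    have hcv : c • v ∈ span ℚ (Set.range fun i => (bM (f i) : E)) := by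
      rw [show c • v = ((y : Λ) : E) from rfl, ← bN.sum_repr y]
      simp only [coe_sum, coe_smul, snf]
      exact sum_mem fun i _ => zsmul_mem (zsmul_mem (subset_span (Set.mem_range_self i)) _) _
    rwa [← Int.cast_smul_eq_zsmul ℚ, smul_mem_iff _ (Int.cast_ne_zero.mpr hc)] at hcv

theorem exists_alternatingMap_eq_one {Λ : Submodule ℤ E} [Λ.IsLattice ℚ] {ι : Type*}
    (b : Basis ι ℤ Λ) {d : ℕ} (f : Fin d ↪ ι) :
    ∃ ψ : E [⋀^Fin d]→ₗ[ℚ] ℚ, ψ (fun i => b (f i)) = 1 ∧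
      ∀ v : Fin d → E, (∀ i, v i ∈ Λ) → ∃ k : ℤ, ψ v = k := by
  let bE := b.extendOfIsLattice ℚ
  let ψ := Matrix.detRowAlternating.compLinearMap (LinearMap.pi fun i => bE.coord (f i))
  have hψ (v : Fin d → E) : ψ v = (Matrix.of fun k i => bE.repr (v k) (f i)).det := rfl
  refine ⟨ψ, ?_, fun v hv => ⟨(Matrix.of fun k i => b.repr ⟨v k, hv k⟩ (f i)).det, ?_⟩⟩
  · rw [hψ, ← Matrix.det_one (n := Fin d) (R := ℚ)]
    congr 1
    ext k i
    rw [Matrix.of_apply, ← b.extendOfIsLattice_apply ℚ, bE.repr_self,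
      Finsupp.single_apply_left f.injective, Finsupp.single_apply, Matrix.one_apply]
  · rw [hψ, Int.cast_det]
    congr 1
    ext k i
    exact b.extendOfIsLattice_repr_apply ⟨v k, hv k⟩ (f i)

theorem exists_dual_ιMulti_eq_one {Λ : Submodule ℤ E} [Λ.IsLattice ℚ] {ι : Type*}
    (b : Basis ι ℤ Λ) {d : ℕ} (f : Fin d ↪ ι) :
    ∃ φ : Dual ℚ (ExteriorAlgebra ℚ E), φ (ιMulti ℚ d fun i => b (f i)) = 1 ∧
      ∀ x ∈ span ℤ (wedgeProducts ℚ d (Λ : Set E)), ∃ k : ℤ, φ x = k := by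
  obtain ⟨ψ, hψ_one, hψ_int⟩ := exists_alternatingMap_eq_one b f
  let φ : Dual ℚ (ExteriorAlgebra ℚ E) := liftAlternating (Pi.single d ψ)
  have hφ (v : Fin d → E) : φ (ιMulti ℚ d v) = ψ v := by
    rw [liftAlternating_apply_ιMulti, Pi.single_eq_same]
  have hφ_int : span ℤ (wedgeProducts ℚ d (Λ : Set E)) ≤
      (1 : Submodule ℤ ℚ).comap (φ.restrictScalars ℤ) := span_le.mpr <| by
    rintro _ ⟨v, hv, rfl⟩
    obtain ⟨k, hk⟩ := hψ_int v hv
    exact mem_one.mpr ⟨k, by simp [hφ, hk]⟩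
  refine ⟨φ, by rw [hφ, hψ_one], fun x hx => ?_⟩
  obtain ⟨k, hk⟩ := mem_one.mp (hφ_int hx)
  exact ⟨k, by simpa using hk.symm⟩

theorem span_wedgeProducts_inf_span_wedgeProducts (Λ : Submodule ℤ E) [Λ.IsLattice ℚ]
    (V : Submodule ℚ E) {d : ℕ} (hd : finrank ℚ V = d) :
    (span ℚ (wedgeProducts ℚ d (V : Set E))).restrictScalars ℤ ⊓
        span ℤ (wedgeProducts ℚ d (Λ : Set E)) =
      span ℤ (wedgeProducts ℚ d ((V.restrictScalars ℤ ⊓ Λ : Submodule ℤ E) : Set E)) := by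
  obtain ⟨b, m, f, hV⟩ := exists_basis_subfamily_span_eq Λ V
  have hℓ : LinearIndependent ℚ fun i => (b (f i) : E) := by
    simpa [Function.comp_def] using (b.extendOfIsLattice ℚ).linearIndependent.comp f f.injective
  obtain rfl : m = d := by rw [← hd, ← hV, finrank_span_eq_card hℓ, Fintype.card_fin]
  obtain ⟨φ, hφ_one, hφ_int⟩ := exists_dual_ιMulti_eq_one b f
  refine le_antisymm ?_ (span_le.mpr ?_)
  · rintro x ⟨hxV, hxΛ⟩
    obtain ⟨q, rfl⟩ := mem_span_singleton.mp (span_wedgeProducts_span_le ℚ _ (hV ▸ hxV))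
    obtain ⟨k, hk⟩ := hφ_int _ hxΛ
    rw [map_smul, hφ_one, smul_eq_mul, mul_one] at hk
    have hℓ_mem (i : Fin m) : (b (f i) : E) ∈ V.restrictScalars ℤ ⊓ Λ :=
      ⟨hV ▸ subset_span (Set.mem_range_self i), (b (f i)).2⟩
    rw [hk, Int.cast_smul_eq_zsmul]
    exact zsmul_mem (subset_span (show _ ∈ wedgeProducts ℚ m _ from ⟨_, hℓ_mem, rfl⟩)) k
  · rintro _ ⟨v, hv, rfl⟩
    exact ⟨subset_span ⟨v, fun i => (hv i).1, rfl⟩, subset_span ⟨v, fun i => (hv i).2, rfl⟩⟩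

end Submodule.IsLattice

instance stdLattice.isLattice (n : ℕ) : (stdLattice n).IsLattice ℚ where
  fg := fg_span (Set.finite_range _)
  span_eq_top := by
    simp_rw [stdLattice, span_span_of_tower, ← Pi.basisFun_apply, Basis.span_eq]

/-- Let `V ⊆ ℚⁿ` be a `d`-dimensional `ℚ`-subspace. Inside the `d`-th exterior power of
`ℚⁿ`, the intersection of the subspace `⋀^d V` (the `ℚ`-span of `v₁ ∧ ⋯ ∧ v_d`, `v i ∈ V`)
with the lattice `⋀^d ℤⁿ` (the `ℤ`-span of wedges of elements of `ℤⁿ`) equals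
`det(V ∩ ℤⁿ)`, the `ℤ`-span of wedges of `d` elements of `V ∩ ℤⁿ`. -/
theorem exteriorPower_subspace_inter_lattice
    (n d : ℕ) (V : Submodule ℚ (Fin n → ℚ)) (hd : Module.finrank ℚ ↥V = d) :
    (Submodule.restrictScalars ℤ
        (Submodule.span ℚ
          {w : ExteriorAlgebra ℚ (Fin n → ℚ) |
            ∃ v : Fin d → (Fin n → ℚ), (∀ i, v i ∈ V) ∧
              w = ExteriorAlgebra.ιMulti ℚ d v})) ⊓
      Submodule.span ℤ
        {w : ExteriorAlgebra ℚ (Fin n → ℚ) |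
          ∃ v : Fin d → (Fin n → ℚ), (∀ i, v i ∈ stdLattice n) ∧
            w = ExteriorAlgebra.ιMulti ℚ d v} =
    Submodule.span ℤ
      {w : ExteriorAlgebra ℚ (Fin n → ℚ) |
        ∃ v : Fin d → (Fin n → ℚ),
          (∀ i, v i ∈ Submodule.restrictScalars ℤ V ⊓ stdLattice n) ∧
            w = ExteriorAlgebra.ιMulti ℚ d v} :=
  IsLattice.span_wedgeProducts_inf_span_wedgeProducts (stdLattice n) V hd
end

section
/- Let A be a finitely generated commutative ℚ-algebra, let a₁, …, a_m ∈ A be elements such that A is finitely generated as a module over the ℚ-subalgebra ℚ[a₁, …, a_m], and let b₁, …, b_l ∈ A be arbitrary elements. Then there exist a real constant c > 0 and a positive integer k such that for every ℚ-algebra homomorphism w from A to the finite adele ring 𝔸_f of ℚ, one has H_f(w(b₁), …, w(b_l)) ≤ c · H_f(w(a₁), …, w(a_m))^k. -/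
open IsDedekindDomain

/-- An element of the finite adele ring `𝔸_f` of `ℚ` is everywhere integral if its
component at every finite place lies in the corresponding ring of integers. -/
def IsEverywhereIntegral (x : FiniteAdeleRing ℤ ℚ) : Prop :=
  ∀ v : HeightOneSpectrum ℤ, x v ∈ v.adicCompletionIntegers ℚ

/-- The non-archimedean height of a finite tuple of finite adeles: the least positive
integer `n` such that `n • xᵢ` is everywhere integral for every `i`. -/
noncomputable def adelicHf {r : ℕ} (x : Fin r → FiniteAdeleRing ℤ ℚ) : ℕ :=
  sInf {n : ℕ | 1 ≤ n ∧ ∀ i, IsEverywhereIntegral ((n : FiniteAdeleRing ℤ ℚ) * x i)}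

/-!
Call `x ∈ A` height-bounded if there are `N, d` such that, for every `w`, `N · H^d` is a
denominator of `w x` whenever `H` is a common denominator of the `w aᵢ`. Height-bounded elements
form a `ℚ`-subalgebra containing the `aᵢ`, and it is integrally closed in `A`: if `x` is a root of a
monic `p` whose coefficients satisfy the bound with `s = N · H^d`, then `s · w x` is a root of the
monic polynomial `p.scaleRoots s` with everywhere integral coefficients, hence everywhere integral,
since each `ℤ_p` is integrally closed in `ℚ_p`. As `A` is finite over `ℚ[a]`, every `bⱼ` is
height-bounded, and taking `H = H_f(w a)` gives the theorem.
-/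

open Polynomial

section ScaledIntegrality

variable {S : Type*} [CommRing S]

theorem intCast_mul_mem_of_dvd {σ : Type*} [SetLike σ S] [SubringClass σ S] {O : σ}
    {m n : ℤ} (hmn : m ∣ n) {y : S} (hy : (m : S) * y ∈ O) : (n : S) * y ∈ O := by
  obtain ⟨k, rfl⟩ := hmn
  rw [Int.cast_mul, mul_right_comm]
  exact mul_mem hy (intCast_mem O k)

theorem natCast_mul_mem_of_dvd {σ : Type*} [SetLike σ S] [SubringClass σ S] {O : σ}
    {m n : ℕ} (hmn : m ∣ n) {y : S} (hy : (m : S) * y ∈ O) : (n : S) * y ∈ O := by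
  obtain ⟨k, rfl⟩ := hmn
  rw [Nat.cast_mul, mul_right_comm]
  exact mul_mem hy (natCast_mem O k)

theorem mul_mem_of_eval_eq_zero_of_mul_coeff_mem {O : Subring S}
    (hO : ∀ x : S, IsIntegral O x → x ∈ O) {p : S[X]} (hp : p.Monic) {x s : S}
    (hx : p.eval x = 0) (hs : s ∈ O) (hc : ∀ j < p.natDegree, s * p.coeff j ∈ O) :
    s * x ∈ O := by
  have hlifts : p.scaleRoots s ∈ lifts (algebraMap O S) := by
    refine (lifts_iff_coeff_lifts _).mpr fun j => ?_
    suffices p.coeff j * s ^ (p.natDegree - j) ∈ O from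
      ⟨⟨_, this⟩, (coeff_scaleRoots p s j).symm⟩
    rcases lt_trichotomy j p.natDegree with hj | rfl | hj
    · obtain ⟨e, he⟩ := Nat.exists_eq_add_of_lt hj
      rw [he, add_assoc, Nat.add_sub_cancel_left, pow_succ', ← mul_assoc, mul_comm _ s]
      exact mul_mem (hc j hj) (pow_mem hs e)
    · simp [hp.coeff_natDegree]
    · simp [coeff_eq_zero_of_natDegree_lt hj]
  obtain ⟨q, hq, -, hqm⟩ :=
    lifts_and_natDegree_eq_and_monic hlifts ((monic_scaleRoots_iff s).mpr hp)
  refine hO _ ⟨q, hqm, ?_⟩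
  rw [← eval_map, hq, scaleRoots_eval_mul, hx, mul_zero]

end ScaledIntegrality

section HeightBound

variable {S : Type*} [CommRing S] [Algebra ℚ S] (O : Subring S)
  {A : Type*} [CommRing A] [Algebra ℚ A] {ι : Type*} (a : ι → A)

/-- For `O` the everywhere integral adeles, `H` ranges over the common denominators of the
`w (a i)`, so this says `H_f(w x) ≤ N · H_f(w a) ^ d`. -/
def IsHeightBoundedBy (N d : ℕ) (x : A) : Prop :=
  ∀ (w : A →ₐ[ℚ] S) (H : ℕ), (∀ i, (H : S) * w (a i) ∈ O) → ((N * H ^ d : ℕ) : S) * w x ∈ O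

variable {O a}

theorem IsHeightBoundedBy.mono {N d N' d' : ℕ} {x : A} (h : IsHeightBoundedBy O a N d x)
    (hN : N ∣ N') (hd : d ≤ d') : IsHeightBoundedBy O a N' d' x := fun w H hH =>
  natCast_mul_mem_of_dvd (mul_dvd_mul hN (pow_dvd_pow H hd)) (h w H hH)

variable (O a)

def heightBoundedSubalgebra : Subalgebra ℚ A where
  carrier := {x | ∃ N d : ℕ, N ≠ 0 ∧ IsHeightBoundedBy O a N d x}
  mul_mem' := by
    rintro x y ⟨N₁, d₁, hN₁, hx⟩ ⟨N₂, d₂, hN₂, hy⟩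
    refine ⟨N₁ * N₂, d₁ + d₂, mul_ne_zero hN₁ hN₂, fun w H hH => ?_⟩
    convert mul_mem (hx w H hH) (hy w H hH) using 1
    push_cast [map_mul, pow_add]
    ring
  add_mem' := by
    rintro x y ⟨N₁, d₁, hN₁, hx⟩ ⟨N₂, d₂, hN₂, hy⟩
    refine ⟨N₁ * N₂, max d₁ d₂, mul_ne_zero hN₁ hN₂, fun w H hH => ?_⟩
    rw [map_add, mul_add]
    exact add_mem (hx.mono (dvd_mul_right _ _) (le_max_left _ _) w H hH)
      (hy.mono (dvd_mul_left _ _) (le_max_right _ _) w H hH)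
  algebraMap_mem' r := ⟨r.den, 0, r.den_ne_zero, fun w H _ => by
    rw [pow_zero, mul_one, AlgHom.commutes, ← map_natCast (algebraMap ℚ S), ← map_mul,
      Rat.den_mul_eq_num, map_intCast]
    exact intCast_mem O r.num⟩

theorem subset_heightBoundedSubalgebra : Set.range a ⊆ heightBoundedSubalgebra O a := by
  rintro _ ⟨i, rfl⟩
  exact ⟨1, 1, one_ne_zero, fun w H hH => by simpa using hH i⟩

variable {O a}

theorem exists_isHeightBoundedBy_of_forall_mem {κ : Type*} (s : Finset κ) (x : κ → A)
    (hx : ∀ j ∈ s, x j ∈ heightBoundedSubalgebra O a) :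
    ∃ N d : ℕ, N ≠ 0 ∧ ∀ j ∈ s, IsHeightBoundedBy O a N d (x j) := by
  classical
  induction s using Finset.induction_on with
  | empty => exact ⟨1, 0, one_ne_zero, by simp⟩
  | insert j s _ ih =>
    obtain ⟨N₁, d₁, hN₁, hj⟩ := hx j (Finset.mem_insert_self j s)
    obtain ⟨N₂, d₂, hN₂, hs⟩ := ih fun i hi => hx i (Finset.mem_insert_of_mem hi)
    refine ⟨N₁ * N₂, max d₁ d₂, mul_ne_zero hN₁ hN₂, (Finset.forall_mem_insert _ _ _).mpr
      ⟨hj.mono (dvd_mul_right _ _) (le_max_left _ _), fun i hi => ?_⟩⟩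
    exact (hs i hi).mono (dvd_mul_left _ _) (le_max_right _ _)

theorem mem_heightBoundedSubalgebra_of_isIntegral (hO : ∀ y : S, IsIntegral O y → y ∈ O)
    {R : Subalgebra ℚ A} (hR : R ≤ heightBoundedSubalgebra O a) {x : A}
    (hx : IsIntegral R x) : x ∈ heightBoundedSubalgebra O a := by
  obtain ⟨p, hp, hpx⟩ := hx
  obtain ⟨N, d, hN, hc⟩ := exists_isHeightBoundedBy_of_forall_mem
    (Finset.range p.natDegree) (fun j => (p.coeff j : A)) fun j _ => hR (p.coeff j).2
  refine ⟨N, d, hN, fun w H hH => ?_⟩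
  let φ : R →+* S := w.toRingHom.comp (algebraMap R A)
  refine mul_mem_of_eval_eq_zero_of_mul_coeff_mem hO (hp.map φ) ?_ (natCast_mem O _) ?_
  · rw [eval_map]
    change eval₂ (w.toRingHom.comp (algebraMap R A)) (w.toRingHom x) p = 0
    rw [← hom_eval₂, hpx, map_zero]
  · intro j hj
    rw [coeff_map]
    exact hc j (Finset.mem_range.mpr (hj.trans_le natDegree_map_le)) w H hH

theorem heightBoundedSubalgebra_eq_top (hO : ∀ y : S, IsIntegral O y → y ∈ O)
    [Module.Finite (Algebra.adjoin ℚ (Set.range a)) A] :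
    heightBoundedSubalgebra O a = ⊤ :=
  eq_top_iff.mpr fun x _ => mem_heightBoundedSubalgebra_of_isIntegral hO
    (Algebra.adjoin_le (subset_heightBoundedSubalgebra O a)) (IsIntegral.of_finite _ x)

end HeightBound

theorem exists_natCast_mul_mem_adicCompletionIntegers (v : HeightOneSpectrum ℤ)
    (y : v.adicCompletion ℚ) :
    ∃ n : ℕ, n ≠ 0 ∧ (n : v.adicCompletion ℚ) * y ∈ v.adicCompletionIntegers ℚ := by
  obtain ⟨b, hb, hyb⟩ :=
    HeightOneSpectrum.adicCompletion.mul_nonZeroDivisor_mem_adicCompletionIntegers v y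
  rw [Algebra.cast, eq_intCast, mul_comm] at hyb
  refine ⟨b.natAbs, Int.natAbs_ne_zero.mpr (nonZeroDivisors.ne_zero hb), ?_⟩
  simpa only [Int.cast_natCast] using intCast_mul_mem_of_dvd Int.dvd_natAbs_self hyb

def integralAdeles : Subring (FiniteAdeleRing ℤ ℚ) where
  carrier := {x | IsEverywhereIntegral x}
  mul_mem' hx hy v := mul_mem (hx v) (hy v)
  one_mem' _ := one_mem _
  add_mem' hx hy v := add_mem (hx v) (hy v)
  zero_mem' _ := zero_mem _
  neg_mem' hx v := neg_mem (hx v)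

theorem mem_integralAdeles_of_isIntegral {x : FiniteAdeleRing ℤ ℚ}
    (hx : IsIntegral integralAdeles x) : x ∈ integralAdeles := fun v => by
  let ψ : FiniteAdeleRing ℤ ℚ →+* v.adicCompletion ℚ :=
    RestrictedProduct.evalRingHom (fun v : HeightOneSpectrum ℤ => v.adicCompletion ℚ) v
  let φ : integralAdeles →+* v.adicCompletionIntegers ℚ :=
    (ψ.comp integralAdeles.subtype).codRestrict _ fun y => y.2 v
  exact (Valuation.valuationSubring.integers _).mem_of_integral (hx.map_of_comp_eq φ ψ rfl)

theorem exists_natCast_mul_mem_integralAdeles (x : FiniteAdeleRing ℤ ℚ) :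
    ∃ n : ℕ, n ≠ 0 ∧ (n : FiniteAdeleRing ℤ ℚ) * x ∈ integralAdeles := by
  choose n hn0 hn using fun v => exists_natCast_mul_mem_adicCompletionIntegers v (x v)
  let T := (Filter.eventually_cofinite.mp x.2).toFinset
  refine ⟨∏ v ∈ T, n v, Finset.prod_ne_zero_iff.mpr fun v _ => hn0 v, fun v => ?_⟩
  change ((∏ v ∈ T, n v : ℕ) : v.adicCompletion ℚ) * x v ∈ _
  by_cases hv : v ∈ T
  · exact natCast_mul_mem_of_dvd (Finset.dvd_prod_of_mem n hv) (hn v)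
  · exact mul_mem (natCast_mem _ _) (not_not.mp ((Set.Finite.mem_toFinset _).not.mp hv))

theorem adelicHf_spec {r : ℕ} (x : Fin r → FiniteAdeleRing ℤ ℚ) :
    1 ≤ adelicHf x ∧ ∀ i, (adelicHf x : FiniteAdeleRing ℤ ℚ) * x i ∈ integralAdeles := by
  choose n hn0 hn using fun i => exists_natCast_mul_mem_integralAdeles (x i)
  exact Nat.sInf_mem
    (s := {n | 1 ≤ n ∧ ∀ i, (n : FiniteAdeleRing ℤ ℚ) * x i ∈ integralAdeles})
    ⟨∏ i, n i, Nat.one_le_iff_ne_zero.mpr (Finset.prod_ne_zero_iff.mpr fun i _ => hn0 i),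
      fun i => natCast_mul_mem_of_dvd (Finset.dvd_prod_of_mem n (Finset.mem_univ i)) (hn i)⟩

theorem adelicHf_le {r : ℕ} {x : Fin r → FiniteAdeleRing ℤ ℚ} {n : ℕ} (hn : n ≠ 0)
    (hx : ∀ i, (n : FiniteAdeleRing ℤ ℚ) * x i ∈ integralAdeles) : adelicHf x ≤ n :=
  Nat.sInf_le ⟨Nat.one_le_iff_ne_zero.mpr hn, hx⟩

theorem height_functoriality_adeles_general
    (A : Type*) [CommRing A] [Algebra ℚ A]
    (m l : ℕ) (a : Fin m → A) (b : Fin l → A)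
    (hfin : Module.Finite ↥(Algebra.adjoin ℚ (Set.range a)) A) :
    ∃ c : ℝ, 0 < c ∧ ∃ k : ℕ, 0 < k ∧
      ∀ w : A →ₐ[ℚ] FiniteAdeleRing ℤ ℚ,
        (adelicHf (fun i => w (b i)) : ℝ) ≤
          c * (adelicHf (fun i => w (a i)) : ℝ) ^ k := by
  have htop : heightBoundedSubalgebra integralAdeles a = ⊤ :=
    heightBoundedSubalgebra_eq_top fun _ => mem_integralAdeles_of_isIntegral
  obtain ⟨N, d, hN, hb⟩ :=
    exists_isHeightBoundedBy_of_forall_mem Finset.univ b fun i _ => htop ▸ Algebra.mem_top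
  refine ⟨N, Nat.cast_pos.mpr (Nat.pos_of_ne_zero hN), d + 1, d.succ_pos, fun w => ?_⟩
  obtain ⟨hH, haH⟩ := adelicHf_spec (fun i => w (a i))
  have hNH : N * adelicHf (fun i => w (a i)) ^ (d + 1) ≠ 0 :=
    mul_ne_zero hN (pow_ne_zero _ (Nat.one_le_iff_ne_zero.mp hH))
  exact_mod_cast adelicHf_le hNH fun i =>
    ((hb i (Finset.mem_univ i)).mono dvd_rfl d.le_succ) w _ haH

/-- Functoriality of heights: if `A` is a finitely generated commutative `ℚ`-algebra which
is module-finite over the subalgebra generated by `a₁, …, a_m`, and `b₁, …, b_l ∈ A`, then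
there exist `c > 0` and `k ≥ 1` such that for every `ℚ`-algebra homomorphism
`w : A → 𝔸_f` one has `H_f(w(b)) ≤ c · H_f(w(a))^k`. -/
theorem height_functoriality_adeles
    (A : Type*) [CommRing A] [Algebra ℚ A] [Algebra.FiniteType ℚ A]
    (m l : ℕ) (a : Fin m → A) (b : Fin l → A)
    (hfin : Module.Finite ↥(Algebra.adjoin ℚ (Set.range a)) A) :
    ∃ c : ℝ, 0 < c ∧ ∃ k : ℕ, 0 < k ∧
      ∀ w : A →ₐ[ℚ] FiniteAdeleRing ℤ ℚ,
        (adelicHf (fun i => w (b i)) : ℝ) ≤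
          c * (adelicHf (fun i => w (a i)) : ℝ) ^ k :=
  height_functoriality_adeles_general A m l a b hfin
end

section
/- For all real numbers c ≥ 1 and H ≥ 1 there exist a real constant C ≥ 1 and a positive integer k, depending only on c and H, with the following property: for every finite set F of prime numbers and all families of positive integers (a_p)_{p ∈ F} and (b_p)_{p ∈ F} satisfying p ≤ c·a_p and a_p ≤ H·b_p for every p ∈ F, one has Π_{p ∈ F} a_p ≤ C · (Π_{p ∈ F} b_p)^k. -/
/-- For all reals `c ≥ 1` and `H ≥ 1` there are `C ≥ 1` and a positive integer `k`,
depending only on `c` and `H`, such that for every finite set `F` of primes and all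
families of positive integers `(a p)`, `(b p)` with `p ≤ c * a p` and `a p ≤ H * b p` for
all `p ∈ F`, one has `∏_{p ∈ F} a p ≤ C * (∏_{p ∈ F} b p) ^ k`. -/
theorem prime_indexed_product_polynomial_bound (c H : ℝ) (hc : 1 ≤ c) (hH : 1 ≤ H) :
    ∃ C : ℝ, 1 ≤ C ∧ ∃ k : ℕ, 0 < k ∧
      ∀ F : Finset ℕ, (∀ p ∈ F, Nat.Prime p) →
        ∀ a b : ℕ → ℕ, (∀ p ∈ F, 0 < a p) → (∀ p ∈ F, 0 < b p) →
          (∀ p ∈ F, (p : ℝ) ≤ c * (a p : ℝ)) →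
          (∀ p ∈ F, (a p : ℝ) ≤ H * (b p : ℝ)) →
          ((∏ p ∈ F, a p : ℕ) : ℝ) ≤ C * ((∏ p ∈ F, b p : ℕ) : ℝ) ^ k := by
  classical
  set m := ⌈Real.logb 2 H⌉₊ with hm
  refine ⟨H ^ (⌊c * H⌋₊ + 1), one_le_pow₀ hH, m + 1, Nat.succ_pos _, ?_⟩
  have hH0 : (0:ℝ) < H := by linarith
  have hH2 : H ≤ (2:ℝ) ^ m := by
    have h1 : H = (2:ℝ) ^ (Real.logb 2 H) := (Real.rpow_logb (by norm_num) (by norm_num) hH0).symm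
    calc H = (2:ℝ) ^ (Real.logb 2 H) := h1
      _ ≤ (2:ℝ) ^ ((m : ℝ)) :=
        (Real.rpow_le_rpow_left_iff (by norm_num)).mpr (Nat.le_ceil _)
      _ = (2:ℝ) ^ m := by rw [Real.rpow_natCast]
  intro F hF a b ha hb hpa hab
  set S := F.filter (fun p => b p = 1) with hS
  set L := F.filter (fun p => ¬ b p = 1) with hL
  push_cast
  have hsplitA : ∏ p ∈ F, (a p : ℝ) = (∏ p ∈ S, (a p:ℝ)) * ∏ p ∈ L, (a p:ℝ) :=
    (Finset.prod_filter_mul_prod_filter_not F _ _).symm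
  have hsplitB : ∏ p ∈ F, (b p : ℝ) = ∏ p ∈ L, (b p:ℝ) := by
    rw [← Finset.prod_filter_mul_prod_filter_not F (fun p => b p = 1) (fun p => (b p : ℝ))]
    have h1 : ∏ p ∈ S, (b p:ℝ) = 1 := Finset.prod_eq_one (fun p hp => by
      have := (Finset.mem_filter.mp hp).2
      rw [this]; norm_num)
    rw [h1, one_mul]
  -- S is contained in range (⌊c*H⌋₊ + 1)
  have hSsub : S ⊆ Finset.range (⌊c * H⌋₊ + 1) := by
    intro p hp
    obtain ⟨hpF, hb1⟩ := Finset.mem_filter.mp hp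
    have h1 : (a p : ℝ) ≤ H := by
      have := hab p hpF; rw [hb1] at this; simpa using this
    have h2 : (p : ℝ) ≤ c * H := by
      have := hpa p hpF
      nlinarith
    have h3 : p ≤ ⌊c * H⌋₊ := Nat.le_floor h2
    exact Finset.mem_range_succ_iff.mpr h3
  have hScard : S.card ≤ ⌊c * H⌋₊ + 1 := by
    have := Finset.card_le_card hSsub
    simpa using this
  have hSprod : ∏ p ∈ S, (a p:ℝ) ≤ H ^ (⌊c * H⌋₊ + 1) := by
    calc ∏ p ∈ S, (a p:ℝ) ≤ ∏ p ∈ S, H := by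
          apply Finset.prod_le_prod (fun p _ => by positivity)
          intro p hp
          obtain ⟨hpF, hb1⟩ := Finset.mem_filter.mp hp
          have := hab p hpF; rw [hb1] at this; simpa using this
      _ = H ^ S.card := Finset.prod_const H
      _ ≤ H ^ (⌊c * H⌋₊ + 1) := pow_le_pow_right₀ hH hScard
  have hLprod : ∏ p ∈ L, (a p:ℝ) ≤ (∏ p ∈ L, (b p:ℝ)) ^ (m + 1) := by
    rw [← Finset.prod_pow]
    apply Finset.prod_le_prod
    · intro p hp; positivity
    · intro p hp
      obtain ⟨hpF, hb1⟩ := Finset.mem_filter.mp hp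
      have hb2 : 2 ≤ b p := by
        have := hb p hpF; omega
      have hb2' : (2:ℝ) ≤ (b p : ℝ) := by exact_mod_cast hb2
      calc (a p : ℝ) ≤ H * (b p : ℝ) := hab p hpF
        _ ≤ (2:ℝ) ^ m * (b p : ℝ) := by nlinarith
        _ ≤ (b p : ℝ) ^ m * (b p : ℝ) := by
            have := pow_le_pow_left₀ (by norm_num : (0:ℝ) ≤ 2) hb2' m
            nlinarith
        _ = (b p : ℝ) ^ (m + 1) := by ring
  have hLnonneg : (0:ℝ) ≤ ∏ p ∈ L, (a p:ℝ) := Finset.prod_nonneg (fun p _ => by positivity)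
  have hpowpos : (0:ℝ) ≤ (∏ p ∈ L, (b p:ℝ)) ^ (m + 1) :=
    pow_nonneg (Finset.prod_nonneg (fun p _ => by positivity)) _
  rw [hsplitA, hsplitB]
  exact mul_le_mul hSprod hLprod hLnonneg (by positivity)
end
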